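/- Let β > 0, γ ∈ (0,1), and let s, z, ȳ, u, v, y₀ : (0,∞) → ℝ be differentiable, set x₀ := y₀ − z, and assume y₀'(r) + y₀(r)/r = γ(z'(r) + z(r)/r) for all r > 0. For λ ≥ 0 let H_λ be the energy density of the scaled configuration as in the scaling identity, and define h₁ := (1/γ)[(v' + v/r + 2y₀u)² − 4(y₀' + y₀/r)uv + γ(u² + v²)s²], h₂ := (1/γ)[4(v'ȳ − ȳ'v)u + 4(2y₀ȳ + v²)u² + (1/(1−γ))(ȳ' + ȳ/r)²], h₃ := (4/γ) ȳ² u². Assume r ↦ r H₀(r) and r ↦ r hᵢ(r) (i = 1,2,3) are integrable on (0,∞), and set ℰ₀ := ∫₀^∞ 2πr H₀ dr, ℰᵢ := ∫₀^∞ 2πr hᵢ dr. If ℰ₁ < 0 and ℰ₃ > 0, then for every ε > 0 there exists λ ∈ (0, ε) such that ∫₀^∞ 2πr H_λ dr < ℰ₀. -/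
import Mathlib


open Set Filter MeasureTheory Topology Real

/-- The energy density of the scaled configuration `y = y₀ + λȳ`, `x = y − z`,
`u_λ = √λ u`, `v_λ = √λ v` about the embedded Nielsen–Olesen vortex (with Higgs
profile `s` and gauge profile `z` held fixed, and `x₀ = y₀ − z`). -/
noncomputable def Hfam (β γ lam : ℝ) (s s' z z' yb yb' u v v' y0 y0' : ℝ → ℝ)
    (r : ℝ) : ℝ :=
  s' r ^ 2 + (z r * s r) ^ 2 + β / 4 * (s r ^ 2 - 1) ^ 2
  + (1 / γ) * (Real.sqrt lam * v' r + Real.sqrt lam * v r / r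
      + 2 * (y0 r + lam * yb r) * (Real.sqrt lam * u r)) ^ 2
  + (1 / γ) * ((y0' r + lam * yb' r) + (y0 r + lam * yb r) / r
      - 2 * lam * u r * v r) ^ 2
  + (1 / (1 - γ)) * (((y0' r - z' r) + lam * yb' r)
      + ((y0 r - z r) + lam * yb r) / r) ^ 2
  + lam * (u r ^ 2 + v r ^ 2) * s r ^ 2

set_option maxHeartbeats 2000000 in
/-- Pointwise expansion of the energy density in powers of `λ`. -/
lemma statement16_key (β γ : ℝ) (hγ0 : γ ≠ 0) (hγ1 : (1:ℝ) - γ ≠ 0) (lam : ℝ)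
    (hlam : 0 ≤ lam)
    (s s' z z' yb yb' u v v' y0 y0' : ℝ → ℝ) (r : ℝ) (hr : r ≠ 0)
    (hc : y0' r + y0 r / r = γ * (z' r + z r / r)) :
    Hfam β γ lam s s' z z' yb yb' u v v' y0 y0' r
    = Hfam β γ 0 s s' z z' yb yb' u v v' y0 y0' r
    + lam * ((1/γ) * ((v' r + v r / r + 2*y0 r*u r)^2
        - 4*(y0' r + y0 r / r)*u r*v r + γ*(u r^2+v r^2)*s r^2))
    + lam^2 * ((1/γ) * (4*(v' r*yb r - yb' r*v r)*u r
        + 4*(2*y0 r*yb r + v r^2)*u r^2 + (1/(1-γ))*(yb' r + yb r / r)^2))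
    + lam^3 * ((4/γ)*yb r^2*u r^2) := by
  have hz : z' r + z r / r = (y0' r + y0 r / r) / γ := by
    rw [hc]; field_simp
  have hz' : z' r = (y0' r + y0 r / r)/γ - z r / r := by linarith
  unfold Hfam
  simp only [Real.sqrt_zero, hz']
  set a := Real.sqrt lam with haa
  have ha2 : lam = a ^ 2 := (Real.sq_sqrt hlam).symm
  rw [ha2]
  field_simp
  ring

/-- Theorem 4 of the paper: if the lowest-order energy shift `ℰ₁` is negative (and
`ℰ₃ > 0`), then there are arbitrarily small scaling parameters `λ > 0` for which the
energy of the scaled configuration lies below the Z_NO energy `ℰ₀`; the Z_NO vortex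
is a saddle point of the energy. -/
theorem statement16 (β γ : ℝ) (hβ : 0 < β) (hγ : γ ∈ Set.Ioo (0:ℝ) 1)
    (s z yb u v y0 s' z' yb' u' v' y0' : ℝ → ℝ)
    (hsd : ∀ r ∈ Set.Ioi (0:ℝ), HasDerivAt s (s' r) r)
    (hzd : ∀ r ∈ Set.Ioi (0:ℝ), HasDerivAt z (z' r) r)
    (hybd : ∀ r ∈ Set.Ioi (0:ℝ), HasDerivAt yb (yb' r) r)
    (hud : ∀ r ∈ Set.Ioi (0:ℝ), HasDerivAt u (u' r) r)
    (hvd : ∀ r ∈ Set.Ioi (0:ℝ), HasDerivAt v (v' r) r)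
    (hy0d : ∀ r ∈ Set.Ioi (0:ℝ), HasDerivAt y0 (y0' r) r)
    (hconstr : ∀ r ∈ Set.Ioi (0:ℝ), y0' r + y0 r / r = γ * (z' r + z r / r))
    (h₁ h₂ h₃ : ℝ → ℝ)
    (hh₁ : ∀ r : ℝ, h₁ r = (1 / γ) * ((v' r + v r / r + 2 * y0 r * u r) ^ 2
        - 4 * (y0' r + y0 r / r) * u r * v r
        + γ * (u r ^ 2 + v r ^ 2) * s r ^ 2))
    (hh₂ : ∀ r : ℝ, h₂ r = (1 / γ) * (4 * (v' r * yb r - yb' r * v r) * u r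
        + 4 * (2 * y0 r * yb r + v r ^ 2) * u r ^ 2
        + (1 / (1 - γ)) * (yb' r + yb r / r) ^ 2))
    (hh₃ : ∀ r : ℝ, h₃ r = (4 / γ) * yb r ^ 2 * u r ^ 2)
    (hint0 : MeasureTheory.IntegrableOn
      (fun r => r * Hfam β γ 0 s s' z z' yb yb' u v v' y0 y0' r) (Set.Ioi 0))
    (hint1 : MeasureTheory.IntegrableOn (fun r => r * h₁ r) (Set.Ioi 0))
    (hint2 : MeasureTheory.IntegrableOn (fun r => r * h₂ r) (Set.Ioi 0))
    (hint3 : MeasureTheory.IntegrableOn (fun r => r * h₃ r) (Set.Ioi 0))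
    (E₀ E₁ E₂ E₃ : ℝ)
    (hE₀ : E₀ = ∫ r in Set.Ioi (0:ℝ),
      2 * Real.pi * r * Hfam β γ 0 s s' z z' yb yb' u v v' y0 y0' r)
    (hE₁ : E₁ = ∫ r in Set.Ioi (0:ℝ), 2 * Real.pi * r * h₁ r)
    (hE₂ : E₂ = ∫ r in Set.Ioi (0:ℝ), 2 * Real.pi * r * h₂ r)
    (hE₃ : E₃ = ∫ r in Set.Ioi (0:ℝ), 2 * Real.pi * r * h₃ r)
    (hE₁neg : E₁ < 0) (hE₃pos : 0 < E₃) :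
    ∀ ε : ℝ, 0 < ε → ∃ lam : ℝ, 0 < lam ∧ lam < ε ∧
      (∫ r in Set.Ioi (0:ℝ),
        2 * Real.pi * r * Hfam β γ lam s s' z z' yb yb' u v v' y0 y0' r) < E₀ := by
  intro ε hε
  obtain ⟨hγ0, hγ1⟩ := hγ
  set M : ℝ := |E₂| + E₃ + 1 with hM
  have hMpos : 0 < M := by positivity
  set lam : ℝ := min (ε/2) (min 1 (-E₁/(2*M))) with hlamdef
  have hlam0 : 0 < lam := by
    apply lt_min (by linarith)
    refine lt_min one_pos (div_pos (by linarith) (by linarith))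
  have hlamε : lam < ε := (min_le_left _ _).trans_lt (by linarith)
  have hlam1 : lam ≤ 1 := (min_le_right _ _).trans (min_le_left _ _)
  have hlamM : lam ≤ -E₁/(2*M) := (min_le_right _ _).trans (min_le_right _ _)
  refine ⟨lam, hlam0, hlamε, ?_⟩
  -- integrability facts
  have hI0 := hint0.const_mul (2*Real.pi)
  have hI1 := (hint1.const_mul (2*Real.pi)).const_mul lam
  have hI2 := (hint2.const_mul (2*Real.pi)).const_mul (lam^2)
  have hI3 := (hint3.const_mul (2*Real.pi)).const_mul (lam^3)
  -- pointwise identity on (0, ∞)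
  have hpt : EqOn (fun r => 2*Real.pi*r*Hfam β γ lam s s' z z' yb yb' u v v' y0 y0' r)
      (fun r => 2*Real.pi*(r*Hfam β γ 0 s s' z z' yb yb' u v v' y0 y0' r)
        + (lam*(2*Real.pi*(r*h₁ r)) + (lam^2*(2*Real.pi*(r*h₂ r))
          + lam^3*(2*Real.pi*(r*h₃ r))))) (Set.Ioi 0) := by
    intro r hr
    have hr0 : r ≠ 0 := ne_of_gt hr
    have hk := statement16_key β γ (ne_of_gt hγ0) (by linarith) lam hlam0.le
      s s' z z' yb yb' u v v' y0 y0' r hr0 (hconstr r hr)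
    simp only [hh₁, hh₂, hh₃]
    rw [hk]
    ring
  have key_eq : (∫ r in Set.Ioi (0:ℝ),
      2*Real.pi*r*Hfam β γ lam s s' z z' yb yb' u v v' y0 y0' r)
      = E₀ + lam*E₁ + lam^2*E₂ + lam^3*E₃ := by
    rw [MeasureTheory.setIntegral_congr_fun measurableSet_Ioi hpt]
    have hI23 : Integrable (fun x => lam^2*(2*Real.pi*(x*h₂ x))
        + lam^3*(2*Real.pi*(x*h₃ x))) (volume.restrict (Set.Ioi 0)) := hI2.add hI3
    have hI123 : Integrable (fun x => lam*(2*Real.pi*(x*h₁ x))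
        + (lam^2*(2*Real.pi*(x*h₂ x)) + lam^3*(2*Real.pi*(x*h₃ x))))
        (volume.restrict (Set.Ioi 0)) := hI1.add hI23
    rw [MeasureTheory.integral_add hI0 hI123,
        MeasureTheory.integral_add hI1 hI23,
        MeasureTheory.integral_add hI2 hI3,
        MeasureTheory.integral_const_mul, MeasureTheory.integral_const_mul,
        MeasureTheory.integral_const_mul, MeasureTheory.integral_const_mul,
        MeasureTheory.integral_const_mul, MeasureTheory.integral_const_mul,
        MeasureTheory.integral_const_mul]
    have e0 : E₀ = 2*Real.pi * ∫ r in Set.Ioi (0:ℝ),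
        r * Hfam β γ 0 s s' z z' yb yb' u v v' y0 y0' r := by
      rw [hE₀, ← MeasureTheory.integral_const_mul]
      congr 1; funext r; ring
    have e1 : E₁ = 2*Real.pi * ∫ r in Set.Ioi (0:ℝ), r * h₁ r := by
      rw [hE₁, ← MeasureTheory.integral_const_mul]
      congr 1; funext r; ring
    have e2 : E₂ = 2*Real.pi * ∫ r in Set.Ioi (0:ℝ), r * h₂ r := by
      rw [hE₂, ← MeasureTheory.integral_const_mul]
      congr 1; funext r; ring
    have e3 : E₃ = 2*Real.pi * ∫ r in Set.Ioi (0:ℝ), r * h₃ r := by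
      rw [hE₃, ← MeasureTheory.integral_const_mul]
      congr 1; funext r; ring
    rw [e0, e1, e2, e3]; ring
  rw [key_eq]
  -- arithmetic: the correction is negative
  have h1 : lam * E₂ ≤ lam * |E₂| :=
    mul_le_mul_of_nonneg_left (le_abs_self _) hlam0.le
  have h2 : lam^2 * E₃ ≤ lam * E₃ := by
    have hll : lam^2 ≤ lam := by nlinarith [mul_nonneg hlam0.le (sub_nonneg.mpr hlam1)]
    exact mul_le_mul_of_nonneg_right hll hE₃pos.le
  have h3 : lam * M ≤ -E₁ / 2 := by
    have h := mul_le_mul_of_nonneg_right hlamM hMpos.le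
    have : (-E₁/(2*M)) * M = -E₁/2 := by field_simp
    linarith
  have hMexp : lam * M = lam * |E₂| + lam * E₃ + lam := by rw [hM]; ring
  have h4 : E₁ + lam*E₂ + lam^2*E₃ < 0 := by linarith
  have h5 : lam * (E₁ + lam*E₂ + lam^2*E₃) < 0 := mul_neg_of_pos_of_neg hlam0 h4
  nlinarith [h5]
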